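/- arXiv:1612.00001 — 2 statements merged into one kernel-verified Lean document; each statement's English description precedes it below -/
import Mathlib

section
/- Let M be a 3b×3b matrix over a field K partitioned into 3×3 blocks M_{ij} (1 ≤ i, j ≤ 3) of order b, with M₂₂ invertible. Define the Schur complements with respect to M₂₂: S_A = M₁₁ − M₁₂ M₂₂⁻¹ M₂₁, S_B = M₁₃ − M₁₂ M₂₂⁻¹ M₂₃, S_C = M₃₁ − M₃₂ M₂₂⁻¹ M₂₁, and S_D = M₃₃ − M₃₂ M₂₂⁻¹ M₂₃, and suppose S_D is invertible. Then the 2b×2b lower-right corner block P = [[M₂₂, M₂₃], [M₃₂, M₃₃]] of M is invertible, and the Schur complement of M with respect to P, namely M₁₁-row/column data [M₁₁] − [M₁₂ M₁₃] P⁻¹ [M₂₁; M₃₁], equals S_A − S_B S_D⁻¹ S_C. -/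
/-!
Crabtree–Haynsworth quotient formula. Inverting `P = [[M₂₂, M₂₃], [M₃₂, M₃₃]]` blockwise about its
invertible corner `M₂₂` expresses `P⁻¹` through `M₂₂⁻¹` and the inverse of the Schur complement
`S_D = P / M₂₂`; multiplying out `[M₁₂ M₁₃] P⁻¹ [M₂₁; M₃₁]` and regrouping the terms gives
`M / P = (M / M₂₂) / (P / M₂₂)`, i.e. `S_A − S_B S_D⁻¹ S_C`.
-/

namespace Matrix

variable {l m n p α : Type*} [Fintype m] [Fintype n] [DecidableEq m] [DecidableEq n] [CommRing α]

theorem isUnit_fromBlocks_of_isUnit₁₁ {A : Matrix m m α} {B : Matrix m n α} {C : Matrix n m α}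
    {D : Matrix n n α} (hA : IsUnit A) (hS : IsUnit (D - C * A⁻¹ * B)) :
    IsUnit (fromBlocks A B C D) := by
  let := hA.invertible
  rwa [isUnit_fromBlocks_iff_of_invertible₁₁, invOf_eq_nonsing_inv]

theorem sub_fromCols_mul_inv_fromBlocks_mul_fromRows (X : Matrix l p α) (U₁ : Matrix l m α)
    (U₂ : Matrix l n α) {A : Matrix m m α} (B : Matrix m n α) (C : Matrix n m α)
    (D : Matrix n n α) (V₁ : Matrix m p α) (V₂ : Matrix n p α) (hA : IsUnit A)
    (hS : IsUnit (D - C * A⁻¹ * B)) :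
    X - fromCols U₁ U₂ * (fromBlocks A B C D)⁻¹ * fromRows V₁ V₂ =
      (X - U₁ * A⁻¹ * V₁) -
        (U₂ - U₁ * A⁻¹ * B) * (D - C * A⁻¹ * B)⁻¹ * (V₂ - C * A⁻¹ * V₁) := by
  let := hA.invertible
  rw [← invOf_eq_nonsing_inv A] at hS ⊢
  let := hS.invertible
  let := fromBlocks₁₁Invertible A B C D
  rw [← invOf_eq_nonsing_inv, ← invOf_eq_nonsing_inv, invOf_fromBlocks₁₁_eq,
    fromCols_mul_fromBlocks, fromCols_mul_fromRows]
  simp only [Matrix.add_mul, Matrix.mul_add, Matrix.sub_mul, Matrix.mul_sub, Matrix.neg_mul,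
    Matrix.mul_neg, Matrix.mul_assoc]
  abel

end Matrix

/-- Quotient property of Schur complements for a 3×3 block matrix:
the Schur complement of `M` with respect to the lower-right 2b×2b corner `P`
equals the nested Schur complement `S_A − S_B S_D⁻¹ S_C` of the one-block
Schur complements with respect to `M₂₂`. -/
theorem bri_nested_schur_3x3 {K : Type*} [Field K] {b : ℕ}
    (M11 M12 M13 M21 M22 M23 M31 M32 M33 : Matrix (Fin b) (Fin b) K)
    (hM22 : IsUnit M22)
    (SA SB SC SD : Matrix (Fin b) (Fin b) K)
    (hSA : SA = M11 - M12 * M22⁻¹ * M21)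
    (hSB : SB = M13 - M12 * M22⁻¹ * M23)
    (hSC : SC = M31 - M32 * M22⁻¹ * M21)
    (hSD : SD = M33 - M32 * M22⁻¹ * M23)
    (hSDunit : IsUnit SD) :
    IsUnit (Matrix.fromBlocks M22 M23 M32 M33) ∧
      M11 - Matrix.fromCols M12 M13 *
          (Matrix.fromBlocks M22 M23 M32 M33)⁻¹ * Matrix.fromRows M21 M31 =
        SA - SB * SD⁻¹ * SC := by
  subst hSA hSB hSC hSD
  exact ⟨Matrix.isUnit_fromBlocks_of_isUnit₁₁ hM22 hSDunit,
    Matrix.sub_fromCols_mul_inv_fromBlocks_mul_fromRows _ _ _ _ _ _ _ _ hM22 hSDunit⟩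
end

section
/- Let M be an invertible 4b×4b matrix over a field K partitioned into 4×4 blocks M_{ij} (1 ≤ i, j ≤ 4) of order b, and write M⁻¹ = (N_{ij}) in the same partition. Suppose M₂₂ is invertible, and for i, j ∈ {1, 3, 4} define the first-level Schur complements S_{ij} = M_{ij} − M_{i2} M₂₂⁻¹ M_{2j}. Suppose S₃₃ is invertible, and for i, j ∈ {1, 4} define the second-level Schur complements T_{ij} = S_{ij} − S_{i3} S₃₃⁻¹ S₃ⱼ. Suppose T₄₄ is invertible. Then T₁₁ − T₁₄ T₄₄⁻¹ T₄₁ is invertible and N₁₁ = (T₁₁ − T₁₄ T₄₄⁻¹ T₄₁)⁻¹. -/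
/-!
The top-left block of the inverse of a 2×2 block matrix whose bottom-right block is invertible
is the inverse of the Schur complement. Splitting off one block index at a time, the block
Schur complement on the remaining indices is invertible and has the same blocks in its inverse
as the original matrix. Eliminating the paper's indices 2, 3 and 4 in turn leaves the single
block `T₁₁ − T₁₄ T₄₄⁻¹ T₄₁`, whose inverse is therefore `N₁₁`.
-/

open Matrix

section TwoBlocks

variable {α p q : Type*} [CommRing α] [Fintype p] [Fintype q] [DecidableEq p] [DecidableEq q]

theorem isUnit_schur_and_toBlocks₁₁_inv (M : Matrix (p ⊕ q) (p ⊕ q) α) (hM : IsUnit M)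
    (hD : IsUnit M.toBlocks₂₂) :
    IsUnit (M.toBlocks₁₁ - M.toBlocks₁₂ * M.toBlocks₂₂⁻¹ * M.toBlocks₂₁) ∧
      M⁻¹.toBlocks₁₁ = (M.toBlocks₁₁ - M.toBlocks₁₂ * M.toBlocks₂₂⁻¹ * M.toBlocks₂₁)⁻¹ := by
  obtain ⟨_⟩ := hD.nonempty_invertible
  rw [← invOf_eq_nonsing_inv M.toBlocks₂₂]
  conv at hM => rw [← fromBlocks_toBlocks M]
  obtain ⟨_⟩ := hM.nonempty_invertible
  have := invertibleOfFromBlocks₂₂Invertible M.toBlocks₁₁ M.toBlocks₁₂ M.toBlocks₂₁ M.toBlocks₂₂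
  refine ⟨isUnit_of_invertible _, ?_⟩
  conv_lhs => rw [← fromBlocks_toBlocks M, ← invOf_eq_nonsing_inv, invOf_fromBlocks₂₂_eq,
    toBlocks_fromBlocks₁₁]
  exact invOf_eq_nonsing_inv _

end TwoBlocks

section BlockIndex

variable {α ι β : Type*} [DecidableEq ι]

def prodSumEquivOfNe (k : ι) : ({i // i ≠ k} × β) ⊕ β ≃ ι × β :=
  (Equiv.sumCongr (Equiv.refl _) (Equiv.punitProd β).symm).trans <|
    (Equiv.sumProdDistrib _ Unit β).symm.trans <|
      Equiv.prodCongr ((Equiv.optionEquivSumPUnit _).symm.trans (Equiv.optionSubtypeNe k))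
        (Equiv.refl β)

@[simp]
theorem prodSumEquivOfNe_inl (k : ι) (i : {i // i ≠ k}) (x : β) :
    prodSumEquivOfNe k (Sum.inl (i, x)) = ((i : ι), x) := rfl

@[simp]
theorem prodSumEquivOfNe_inr (k : ι) (x : β) : prodSumEquivOfNe k (Sum.inr x) = (k, x) := rfl

variable [CommRing α] [Fintype ι] [Fintype β] [DecidableEq β]

noncomputable def blockSchurCompl (Mb : Matrix ι ι (Matrix β β α)) (k : ι) :
    Matrix {i // i ≠ k} {i // i ≠ k} (Matrix β β α) :=
  fun i j => Mb i j - Mb i k * (Mb k k)⁻¹ * Mb k j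

theorem isUnit_comp_blockSchurCompl_and_inv_apply (Mb : Matrix ι ι (Matrix β β α)) (k : ι)
    (hM : IsUnit (comp ι ι β β α Mb)) (hk : IsUnit (Mb k k)) :
    IsUnit (comp _ _ β β α (blockSchurCompl Mb k)) ∧
      ∀ (i j : {i // i ≠ k}) (x y : β),
        (comp ι ι β β α Mb)⁻¹ (i, x) (j, y) =
          (comp _ _ β β α (blockSchurCompl Mb k))⁻¹ (i, x) (j, y) := by
  set N := (comp ι ι β β α Mb).submatrix (prodSumEquivOfNe k) (prodSumEquivOfNe k)
  have hschur : N.toBlocks₁₁ - N.toBlocks₁₂ * N.toBlocks₂₂⁻¹ * N.toBlocks₂₁ =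
      comp _ _ β β α (blockSchurCompl Mb k) := by
    ext ⟨i, x⟩ ⟨j, y⟩
    simp only [N, toBlocks₁₁, toBlocks₁₂, toBlocks₂₁, toBlocks₂₂, submatrix_apply, comp_apply,
      prodSumEquivOfNe_inl, prodSumEquivOfNe_inr, of_apply, Matrix.sub_apply, mul_apply,
      Finset.sum_mul, blockSchurCompl, sub_right_inj]
    rfl
  obtain ⟨hS, hinv⟩ := isUnit_schur_and_toBlocks₁₁_inv N ((isUnit_submatrix_equiv _ _).2 hM) hk
  rw [hschur] at hS hinv
  rw [show N⁻¹ = _ from inv_submatrix_equiv _ _ _] at hinv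
  exact ⟨hS, fun i j x y => congrFun (congrFun hinv (i, x)) (j, y)⟩

theorem isUnit_comp_iff_of_subsingleton [Subsingleton ι] (Mb : Matrix ι ι (Matrix β β α))
    (i : ι) : IsUnit (comp ι ι β β α Mb) ↔ IsUnit (Mb i i) := by
  let e : β ≃ ι × β := (@Equiv.uniqueProd β ι (uniqueOfSubsingleton i)).symm
  exact (isUnit_submatrix_equiv (A := comp ι ι β β α Mb) e e).symm

theorem inv_comp_apply_of_subsingleton [Subsingleton ι] (Mb : Matrix ι ι (Matrix β β α))
    (i : ι) (x y : β) : (comp ι ι β β α Mb)⁻¹ (i, x) (i, y) = (Mb i i)⁻¹ x y := by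
  let e : β ≃ ι × β := (@Equiv.uniqueProd β ι (uniqueOfSubsingleton i)).symm
  have hMb : (comp ι ι β β α Mb).submatrix e e = Mb i i := rfl
  rw [← hMb, inv_submatrix_equiv]
  rfl

end BlockIndex

/-- BRI for `k = 4`: the upper-left block `N₁₁` of the inverse of an invertible
4×4 block matrix is the inverse of the doubly-nested Schur complement
`T₁₁ − T₁₄ T₄₄⁻¹ T₄₁`. Blocks are 0-indexed: `Mb i j` is the paper's
`M_{(i+1)(j+1)}`, so the paper's index sets `{1,3,4}` and `{1,4}` become
`{0,2,3}` (i.e. `≠ 1`) and `{0,3}`. -/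
theorem bri_k4_topLeft_block {K : Type*} [Field K] {b : ℕ}
    (Mb : Fin 4 → Fin 4 → Matrix (Fin b) (Fin b) K)
    (M : Matrix (Fin 4 × Fin b) (Fin 4 × Fin b) K)
    (hblocks : ∀ (i j : Fin 4) (x y : Fin b), M (i, x) (j, y) = Mb i j x y)
    (hM : IsUnit M) (hM22 : IsUnit (Mb 1 1))
    (S : Fin 4 → Fin 4 → Matrix (Fin b) (Fin b) K)
    (hS : ∀ i j : Fin 4, i ≠ 1 → j ≠ 1 →
      S i j = Mb i j - Mb i 1 * (Mb 1 1)⁻¹ * Mb 1 j)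
    (hS33 : IsUnit (S 2 2))
    (T : Fin 4 → Fin 4 → Matrix (Fin b) (Fin b) K)
    (hT : ∀ i j : Fin 4, (i = 0 ∨ i = 3) → (j = 0 ∨ j = 3) →
      T i j = S i j - S i 2 * (S 2 2)⁻¹ * S 2 j)
    (hT44 : IsUnit (T 3 3)) :
    IsUnit (T 0 0 - T 0 3 * (T 3 3)⁻¹ * T 3 0) ∧
      (Matrix.of fun x y : Fin b => M⁻¹ ((0 : Fin 4), x) ((0 : Fin 4), y)) =
        (T 0 0 - T 0 3 * (T 3 3)⁻¹ * T 3 0)⁻¹ := by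
  -- Blocks are 0-indexed: `k₂`, `k₃`, `i₀` are the paper's blocks 3, 4, 1 in the nested subtypes.
  let k₂ : {i : Fin 4 // i ≠ 1} := ⟨2, by decide⟩
  let k₃ : {i // i ≠ k₂} := ⟨⟨3, by decide⟩, by decide⟩
  let i₀ : {i // i ≠ k₃} := ⟨⟨⟨0, by decide⟩, by decide⟩, by decide⟩
  let Sb : Matrix {i : Fin 4 // i ≠ 1} {i : Fin 4 // i ≠ 1} _ := fun i j => S i j
  let Tb : Matrix {i // i ≠ k₂} {i // i ≠ k₂} _ := fun i j => T i j
  have hMb : M = comp _ _ _ _ _ Mb := by ext ⟨i, x⟩ ⟨j, y⟩; exact hblocks i j x y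
  have hSb : blockSchurCompl Mb 1 = Sb := funext₂ fun i j => (hS i j i.2 j.2).symm
  have hTb : blockSchurCompl Sb k₂ = Tb := funext₂ fun i j =>
    (hT i j (by revert i; decide) (by revert j; decide)).symm
  have : Subsingleton {i // i ≠ k₃} := ⟨by decide⟩
  subst hMb
  obtain ⟨hSu, hM_S⟩ := isUnit_comp_blockSchurCompl_and_inv_apply Mb 1 hM hM22
  rw [hSb] at hSu hM_S
  obtain ⟨hTu, hS_T⟩ := isUnit_comp_blockSchurCompl_and_inv_apply Sb k₂ hSu hS33
  rw [hTb] at hTu hS_T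
  obtain ⟨hUu, hT_U⟩ := isUnit_comp_blockSchurCompl_and_inv_apply Tb k₃ hTu hT44
  refine ⟨(isUnit_comp_iff_of_subsingleton _ i₀).1 hUu, ?_⟩
  ext x y
  exact (hM_S i₀.1.1 i₀.1.1 x y).trans <| (hS_T i₀.1 i₀.1 x y).trans <|
    (hT_U i₀ i₀ x y).trans (inv_comp_apply_of_subsingleton _ i₀ x y)
end
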